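/- Let F = ℤ/2ℤ, X a finite set, and let (f_n : V_n → V_n)_{n≥0} be a family of F-linear maps on the graded pieces V_n of Ξ_X (V_n spanned by monomials of total degree n) satisfying ξ_x ∘ f_n = f_{n-1} ∘ ξ_x for all x ∈ X and all n ≥ 1. If f_0 = 0 then f_n = 0 for all n, and if f_0 = Id then f_n = Id for all n. -/

import Mathlib

/-!
STATEMENT 5: Let F = ℤ/2ℤ, X a finite set, and (f_n : V_n → V_n) a family of F-linear
maps on the graded pieces of Ξ_X satisfying ξ_x ∘ f_n = f_{n-1} ∘ ξ_x for all x, n ≥ 1.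
If f₀ = 0 then all f_n = 0; if f₀ = Id then all f_n = Id.
-/

noncomputable section

abbrev F2 := ZMod 2

abbrev XiX (X : Type) : Type := (X →₀ ℕ) →₀ F2

def ximon {X : Type} (n : X →₀ ℕ) : XiX X := Finsupp.single n 1

/-- Multiplication by `ξ_x` on `Ξ_X`. -/
def xiMul {X : Type} [DecidableEq X] (x : X) : XiX X →ₗ[F2] XiX X :=
  Finsupp.lsum F2 fun n =>
    if n x = 0 then (0 : F2 →ₗ[F2] XiX X)
    else Finsupp.lsingle (n - Finsupp.single x 1)

/-- `V_n`: the span of the monomials of total degree `n`. -/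
def Vn (X : Type) (k : ℕ) : Submodule F2 (XiX X) :=
  Submodule.span F2 {v | ∃ n : X →₀ ℕ, (n.sum fun _ m => m) = k ∧ v = ximon n}


lemma xiMul_apply {X : Type} [DecidableEq X] (x : X) (w : XiX X) (m : X →₀ ℕ) :
    xiMul x w m = w (m + Finsupp.single x 1) := by
  induction w using Finsupp.induction_linear with
  | zero => simp
  | add f g hf hg => simp [Finsupp.add_apply, hf, hg]
  | single n c =>
    rw [xiMul, Finsupp.lsum_single]
    by_cases h : n x = 0
    · rw [if_pos h]
      have : n ≠ m + Finsupp.single x 1 := by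
        intro he
        have := congrArg (fun p => p x) he
        simp at this
        omega
      simp [Finsupp.single_apply, this]
    · rw [if_neg h]
      have : (n - Finsupp.single x 1 = m) ↔ (n = m + Finsupp.single x 1) := by
        constructor
        · intro he
          ext y
          have := congrArg (fun p => p y) he
          simp only [Finsupp.tsub_apply, Finsupp.add_apply, Finsupp.single_apply] at this ⊢
          by_cases hyx : x = y
          · subst hyx
            simp only [if_pos rfl, if_true] at this ⊢
            omega
          · simp only [if_neg hyx] at this ⊢
            omega
        · intro he
          ext y
          simp [he, Finsupp.tsub_apply, Finsupp.single_apply]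
      simp only [Finsupp.lsingle_apply, Finsupp.single_apply, this]

lemma Vn_apply_zero {X : Type} (k : ℕ) (hk : k ≠ 0) (w : XiX X) (hw : w ∈ Vn X k) :
    w 0 = 0 := by
  induction hw using Submodule.span_induction with
  | mem v hv =>
    obtain ⟨n, hn, rfl⟩ := hv
    have : n ≠ 0 := by rintro rfl; simp [Finsupp.sum] at hn; omega
    exact Finsupp.single_eq_of_ne' this
  | zero => rfl
  | add a b _ _ ha hb => simp [Finsupp.add_apply, ha, hb]
  | smul c a _ ha => simp [Finsupp.smul_apply, ha]

lemma eq_zero_of_xiMul {X : Type} [DecidableEq X] (k : ℕ) (w : XiX X)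
    (hw : w ∈ Vn X (k + 1)) (h : ∀ x, xiMul x w = 0) : w = 0 := by
  ext n
  by_cases hn : n = 0
  · subst hn; simpa using Vn_apply_zero (k + 1) (by omega) w hw
  · obtain ⟨x, hx⟩ : ∃ x, n x ≠ 0 := by
      by_contra h'
      push_neg at h'
      exact hn (Finsupp.ext fun y => h' y)
    have key := xiMul_apply x w (n - Finsupp.single x 1)
    rw [h x] at key
    have hn' : n - Finsupp.single x 1 + Finsupp.single x 1 = n := by
      ext y
      simp only [Finsupp.add_apply, Finsupp.tsub_apply, Finsupp.single_apply]
      by_cases hyx : x = y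
      · subst hyx; simp only [if_pos rfl, if_true]; omega
      · simp only [if_neg hyx]; omega
    rw [hn'] at key
    simpa using key.symm

lemma main_zero {X : Type} [Fintype X] [DecidableEq X]
    (f : ∀ k : ℕ, Vn X k →ₗ[F2] Vn X k)
    (hmap : ∀ (x : X) (k : ℕ) (v : XiX X), v ∈ Vn X (k + 1) → xiMul x v ∈ Vn X k)
    (hcomm : ∀ (x : X) (k : ℕ) (v : Vn X (k + 1)),
      xiMul x ((f (k + 1) v : XiX X)) =
        ((f k ⟨xiMul x (v : XiX X), hmap x k v v.2⟩ : Vn X k) : XiX X))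
    (h0 : f 0 = 0) : ∀ k, f k = 0 := by
  intro k
  induction k with
  | zero => exact h0
  | succ k ih =>
    refine LinearMap.ext fun v => ?_
    have hker : ∀ x, xiMul x ((f (k + 1) v : XiX X)) = 0 := by
      intro x
      rw [hcomm x k v, ih]
      rfl
    have := eq_zero_of_xiMul k _ (f (k + 1) v).2 hker
    exact Subtype.ext (by simpa using this)

theorem stmt5 (X : Type) [Fintype X] [DecidableEq X]
    (f : ∀ k : ℕ, Vn X k →ₗ[F2] Vn X k)
    (hmap : ∀ (x : X) (k : ℕ) (v : XiX X), v ∈ Vn X (k + 1) → xiMul x v ∈ Vn X k)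
    (hcomm : ∀ (x : X) (k : ℕ) (v : Vn X (k + 1)),
      xiMul x ((f (k + 1) v : XiX X)) =
        ((f k ⟨xiMul x (v : XiX X), hmap x k v v.2⟩ : Vn X k) : XiX X)) :
    (f 0 = 0 → ∀ k, f k = 0) ∧ (f 0 = LinearMap.id → ∀ k, f k = LinearMap.id) := by
  constructor
  · exact main_zero f hmap hcomm
  · intro h0 k
    set g : ∀ k : ℕ, Vn X k →ₗ[F2] Vn X k := fun k => f k - LinearMap.id with hg
    have hgcomm : ∀ (x : X) (k : ℕ) (v : Vn X (k + 1)),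
        xiMul x ((g (k + 1) v : XiX X)) =
          ((g k ⟨xiMul x (v : XiX X), hmap x k v v.2⟩ : Vn X k) : XiX X) := by
      intro x k v
      simp only [hg, LinearMap.sub_apply, LinearMap.id_apply, AddSubgroupClass.coe_sub,
        map_sub, hcomm x k v]
    have hg0 : g 0 = 0 := by rw [hg]; simp [h0]
    have := main_zero g hmap hgcomm hg0 k
    have : f k - LinearMap.id = 0 := this
    rwa [sub_eq_zero] at this
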